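/- Let 𝕊 be an algebraic theory in which every operation of positive arity has a unit constant, and which has a term with at least two free variables. Let 𝕋 be an algebraic theory in which any term equal to a variable-free term is itself variable-free. If 𝕋 has two distinct constants (i.e., two constants not provably equal), then there exists no composite theory of 𝕊 and 𝕋. -/

import Mathlib

/-! ### Algebraic theories, equational logic, and composite theories -/

structure Signature where
  Op : Type
  ar : Op → Nat

inductive Term (Sg : Signature) (V : Type) : Type
  | var : V → Term Sg V
  | op : (o : Sg.Op) → (Fin (Sg.ar o) → Term Sg V) → Term Sg V

def Term.subst {Sg : Signature} {V W : Type} : Term Sg V → (V → Term Sg W) → Term Sg W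
  | .var v, f => f v
  | .op o ts, f => .op o (fun i => (ts i).subst f)

/-- Renaming of variables. -/
def Term.rename {Sg : Signature} {V W : Type} (f : V → W) (t : Term Sg V) : Term Sg W :=
  t.subst (fun v => .var (f v))

/-- The set of free variables of a term. -/
def Term.fv {Sg : Signature} {V : Type} : Term Sg V → Set V
  | .var v => {v}
  | .op _ ts => ⋃ i, (ts i).fv

/-- An algebraic theory: a signature together with a set of equations (axioms),
given as pairs of terms over the variables ℕ. -/
structure Theory where
  sig : Signature
  Ax : Term sig Nat → Term sig Nat → Prop

/-- Provable equality in equational logic over a theory. -/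
inductive Theory.Eq (T : Theory) : {V : Type} → Term T.sig V → Term T.sig V → Prop
  | ax {V : Type} {s t : Term T.sig Nat} (h : T.Ax s t) (f : Nat → Term T.sig V) :
      Theory.Eq T (s.subst f) (t.subst f)
  | refl {V : Type} (t : Term T.sig V) : Theory.Eq T t t
  | symm {V : Type} {s t : Term T.sig V} : Theory.Eq T s t → Theory.Eq T t s
  | trans {V : Type} {s t u : Term T.sig V} :
      Theory.Eq T s t → Theory.Eq T t u → Theory.Eq T s u
  | congr {V : Type} (o : T.sig.Op) {ts ts' : Fin (T.sig.ar o) → Term T.sig V}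
      (h : ∀ i, Theory.Eq T (ts i) (ts' i)) : Theory.Eq T (.op o ts) (.op o ts')
  | subst {V W : Type} {s t : Term T.sig V} (f : V → Term T.sig W) :
      Theory.Eq T s t → Theory.Eq T (s.subst f) (t.subst f)

/-- Disjoint union of two signatures. -/
def Signature.sum (A B : Signature) : Signature := ⟨A.Op ⊕ B.Op, Sum.elim A.ar B.ar⟩

/-- Embedding of terms of the first theory into the sum signature. -/
def Term.inL {A B : Signature} {V : Type} : Term A V → Term (A.sum B) V
  | .var v => .var v
  | .op o ts => .op (Sum.inl o) (fun i => (ts i).inL)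

/-- Embedding of terms of the second theory into the sum signature. -/
def Term.inR {A B : Signature} {V : Type} : Term B V → Term (A.sum B) V
  | .var v => .var v
  | .op o ts => .op (Sum.inr o) (fun i => (ts i).inR)

/-- A closed term, regarded as a term over any variable set. -/
def Term.ofClosed {Sg : Signature} {V : Type} (t : Term Sg Empty) : Term Sg V :=
  t.rename (fun x => x.elim)

/-- A candidate composite theory of `S` and `T`: a theory over the disjoint
union of the two signatures. -/
structure Composite (S T : Theory) where
  Ax : Term (S.sig.sum T.sig) Nat → Term (S.sig.sum T.sig) Nat → Prop

def Composite.U {S T : Theory} (C : Composite S T) : Theory := ⟨S.sig.sum T.sig, C.Ax⟩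

/-- A separated term: a `T`-term with `S`-terms substituted for its variables. -/
def sep {S T : Theory} {V : Type} (t : Term T.sig Nat) (σ : Nat → Term S.sig V) :
    Term (S.sig.sum T.sig) V :=
  (Term.inR (A := S.sig) t).subst (fun n => Term.inL (σ n))

/-- `C` is a composite theory of `S` and `T` in the sense of Pirog–Staton:
it contains both theories, and satisfies separation and essential uniqueness. -/
structure IsComposite {S T : Theory} (C : Composite S T) : Prop where
  containsS : ∀ {V : Type} (s s' : Term S.sig V), S.Eq s s' → C.U.Eq s.inL s'.inL
  containsT : ∀ {V : Type} (t t' : Term T.sig V), T.Eq t t' → C.U.Eq t.inR t'.inR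
  separation : ∀ {V : Type} (u : Term (S.sig.sum T.sig) V),
      ∃ (t : Term T.sig Nat) (σ : Nat → Term S.sig V), C.U.Eq u (sep t σ)
  essUniq : ∀ {V : Type} (t t' : Term T.sig Nat) (σ σ' : Nat → Term S.sig V),
      C.U.Eq (sep t σ) (sep t' σ') →
      ∃ (Z : Type) (f g : Nat → Z),
        T.Eq (t.rename f) (t'.rename g) ∧
        (∀ i j, f i = f j ↔ S.Eq (σ i) (σ j)) ∧
        (∀ i j, g i = g j ↔ S.Eq (σ' i) (σ' j)) ∧
        (∀ i j, f i = g j ↔ S.Eq (σ i) (σ' j))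

/-- Property: any term provably equal to a variable-free term is variable-free. -/
def VarFree0 (T : Theory) : Prop :=
  ∀ (V : Type) (t t' : Term T.sig V), t.fv = ∅ → T.Eq t t' → t'.fv = ∅

/-- Property: any term provably equal to a variable `x` has free variables `⊆ {x}`. -/
def VarSingle (T : Theory) : Prop :=
  ∀ (V : Type) (x : V) (t : Term T.sig V), T.Eq t (.var x) → t.fv ⊆ {x}

/-- Property: every operation of positive arity has a unit constant. -/
def HasUnits (S : Theory) : Prop :=
  ∀ o : S.sig.Op, 1 ≤ S.sig.ar o →
    ∃ e : Term S.sig Empty, ∀ k : Fin (S.sig.ar o),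
      S.Eq (.op o (fun i => if i = k then .var (0 : Nat) else e.ofClosed)) (.var 0)

/-- Application of a term with (at most) free variables `0, 1` to two arguments. -/
def app2 {Sg : Signature} {V : Type} (t : Term Sg Nat) (A B : Term Sg V) : Term Sg V :=
  t.subst (fun n => if n = 0 then A else B)

/-! In a composite, every `𝕋`-constant `c` is a multiplicative zero for `𝕊`. If `e` is a unit
of `o`, the unit law gives `o(c, e, …, e) = c`. Separate `o(c, x₂, …, xₙ)` as `t(σ)`; substituting
`e` for every variable gives `t(σ[e]) = c`, so by essential uniqueness `t` is provably equal to a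
closed `𝕋`-term, hence closed, and `o(c, x₂, …, xₙ) = t(σ) = t(σ[e]) = c`. By induction, an
`𝕊`-term becomes `c` as soon as `c` is put at one of its free variables. Putting `c₁` at `xᵢ` and
`c₂` elsewhere in `s` proves `c₁ = c₂` in the composite, hence in `𝕋` by essential uniqueness. -/

namespace Term

variable {Sg : Signature}

theorem subst_congr {V W : Type} {t : Term Sg V} {f g : V → Term Sg W}
    (h : ∀ v ∈ t.fv, f v = g v) : t.subst f = t.subst g := by
  induction t with
  | var v => exact h v rfl
  | op o ts ih =>
    simp only [Term.subst]
    congr 1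
    funext k
    exact ih k fun v hv => h v (Set.mem_iUnion.mpr ⟨k, hv⟩)

theorem subst_subst {V W X : Type} (t : Term Sg V) (f : V → Term Sg W) (g : W → Term Sg X) :
    (t.subst f).subst g = t.subst fun v => (f v).subst g := by
  induction t with
  | var v => rfl
  | op o ts ih =>
    simp only [Term.subst]
    congr 1
    funext k
    exact ih k

theorem subst_var {V : Type} (t : Term Sg V) : t.subst Term.var = t := by
  induction t with
  | var v => rfl
  | op o ts ih =>
    simp only [Term.subst]
    congr 1
    funext k
    exact ih k

theorem fv_rename {V W : Type} (f : V → W) (t : Term Sg V) : (t.rename f).fv = f '' t.fv := by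
  induction t with
  | var v => exact Set.image_singleton.symm
  | op o ts ih =>
    change (⋃ k, ((ts k).rename f).fv) = f '' ⋃ k, (ts k).fv
    rw [Set.image_iUnion]
    exact Set.iUnion_congr ih

theorem fv_ofClosed {V : Type} (t : Term Sg Empty) : (t.ofClosed : Term Sg V).fv = ∅ := by
  rw [ofClosed, fv_rename, Set.eq_empty_of_isEmpty t.fv, Set.image_empty]

theorem ofClosed_subst {V W : Type} (t : Term Sg Empty) (f : V → Term Sg W) :
    (t.ofClosed : Term Sg V).subst f = t.ofClosed := by
  rw [ofClosed, rename, subst_subst]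
  congr 1
  funext v
  exact v.elim

theorem ofClosed_rename {V W : Type} (t : Term Sg Empty) (f : V → W) :
    (t.ofClosed : Term Sg V).rename f = t.ofClosed :=
  ofClosed_subst t _

theorem ofClosed_eq_self (t : Term Sg Empty) : (t.ofClosed : Term Sg Empty) = t := by
  conv_rhs => rw [← subst_var t]
  exact congrArg t.subst (funext fun v => v.elim)

variable {A B : Signature}

theorem inL_subst {V W : Type} (t : Term A V) (f : V → Term A W) :
    (t.subst f).inL (B := B) = t.inL.subst fun v => (f v).inL := by
  induction t with
  | var v => rfl
  | op o ts ih =>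
    simp only [Term.subst, Term.inL]
    congr 1
    funext k
    exact ih k

theorem inR_subst {V W : Type} (t : Term B V) (f : V → Term B W) :
    (t.subst f).inR (A := A) = t.inR.subst fun v => (f v).inR := by
  induction t with
  | var v => rfl
  | op o ts ih =>
    simp only [Term.subst, Term.inR]
    congr 1
    funext k
    exact ih k

theorem ofClosed_inL {V : Type} (t : Term A Empty) :
    (t.ofClosed : Term A V).inL (B := B) = t.inL.ofClosed :=
  inL_subst t _

theorem ofClosed_inR {V : Type} (t : Term B Empty) :
    (t.ofClosed : Term B V).inR (A := A) = t.inR.ofClosed :=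
  inR_subst t _

theorem fv_inR {V : Type} (t : Term B V) : (t.inR (A := A)).fv = t.fv := by
  induction t with
  | var v => rfl
  | op o ts ih => exact Set.iUnion_congr ih

end Term

namespace Theory.Eq

variable {U : Theory} {V : Type} {c₁ c₂ : Term U.sig Empty}

theorem ofClosed_subst {W : Type} (h : U.Eq (c₁.ofClosed : Term U.sig V) c₂.ofClosed)
    (f : V → Term U.sig W) : U.Eq (c₁.ofClosed : Term U.sig W) c₂.ofClosed := by
  simpa only [Term.ofClosed_subst] using h.subst f

theorem of_ofClosed (h : U.Eq (c₁.ofClosed : Term U.sig V) c₂.ofClosed) : U.Eq c₁ c₂ := by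
  simpa only [Term.ofClosed_eq_self] using h.ofClosed_subst fun _ => c₁

theorem op_update (o : U.sig.Op) (args : Fin (U.sig.ar o) → Term U.sig V) (m : Fin (U.sig.ar o))
    {x : Term U.sig V}
    (h : U.Eq (args m) x) : U.Eq (.op o args) (.op o (Function.update args m x)) := by
  refine .congr o fun k => ?_
  rcases eq_or_ne k m with rfl | hk
  · rwa [Function.update_self]
  · rw [Function.update_of_ne hk]
    exact .refl _

end Theory.Eq

section Sep

variable {S T : Theory}

theorem sep_congr {V : Type} {t : Term T.sig Nat} {σ σ' : Nat → Term S.sig V}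
    (h : ∀ n ∈ t.fv, σ n = σ' n) : sep t σ = sep t σ' :=
  Term.subst_congr fun n hn => congrArg Term.inL (h n (Term.fv_inR t ▸ hn))

theorem sep_subst {V W : Type} (t : Term T.sig Nat) (σ : Nat → Term S.sig V)
    (θ : V → Term S.sig W) :
    (sep t σ).subst (fun v => (θ v).inL) = sep t fun n => (σ n).subst θ := by
  rw [sep, sep, Term.subst_subst]
  congr 1
  funext n
  exact (Term.inL_subst (σ n) θ).symm

theorem sep_ofClosed {V : Type} (c : Term T.sig Empty) (σ : Nat → Term S.sig V) :
    sep c.ofClosed σ = c.inR.ofClosed := by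
  rw [sep, Term.ofClosed_inR, Term.ofClosed_subst]

end Sep

namespace IsComposite

variable {S T : Theory} {C : Composite S T}

theorem fv_eq_empty_of_sep_eq_const (hC : IsComposite C) (hT0 : VarFree0 T)
    {c : Term T.sig Empty} {V : Type} {t : Term T.sig Nat} {σ : Nat → Term S.sig V}
    (h : C.U.Eq (sep t σ) c.inR.ofClosed) : t.fv = ∅ := by
  rw [← sep_ofClosed c σ] at h
  obtain ⟨Z, f, g, hT, -⟩ := hC.essUniq _ _ _ _ h
  have hfv : (t.rename f).fv = ∅ :=
    hT0 Z _ _ (by rw [Term.ofClosed_rename]; exact Term.fv_ofClosed c) hT.symm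
  rwa [Term.fv_rename, Set.image_eq_empty] at hfv

theorem eq_const_of_subst_eq_const (hC : IsComposite C) (hT0 : VarFree0 T)
    {c : Term T.sig Empty} {V : Type} {u : Term (S.sig.sum T.sig) V} (θ : V → Term S.sig V)
    (h : C.U.Eq (u.subst fun v => (θ v).inL) c.inR.ofClosed) : C.U.Eq u c.inR.ofClosed := by
  obtain ⟨t, σ, hu⟩ := hC.separation u
  have hθ : C.U.Eq (sep t fun n => (σ n).subst θ) c.inR.ofClosed := by
    rw [← sep_subst]
    exact (hu.subst _).symm.trans h
  have ht : t.fv = ∅ := hC.fv_eq_empty_of_sep_eq_const hT0 hθ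
  rw [sep_congr (σ' := fun n => (σ n).subst θ) (by simp [ht])] at hu
  exact hu.trans hθ

theorem op_update_var_eq_const (hC : IsComposite C) (hS : HasUnits S) (hT0 : VarFree0 T)
    (c : Term T.sig Empty) (o : S.sig.Op) (m : Fin (S.sig.ar o)) :
    C.U.Eq (.op (.inl o) (Function.update Term.var m c.inR.ofClosed)) c.inR.ofClosed := by
  obtain ⟨e, he⟩ := hS o m.pos
  refine hC.eq_const_of_subst_eq_const hT0 (fun _ => e.ofClosed) ?_
  have hunit := (hC.containsS _ _ (he m)).subst
    fun _ => (c.inR.ofClosed : Term (S.sig.sum T.sig) (Fin (S.sig.ar o)))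
  have hargs : (fun k => (Function.update Term.var m c.inR.ofClosed k).subst
        fun _ => (e.ofClosed : Term S.sig (Fin (S.sig.ar o))).inL) =
      fun k => (if k = m then Term.var 0 else e.ofClosed).inL.subst
        fun _ => (c.inR.ofClosed : Term (S.sig.sum T.sig) (Fin (S.sig.ar o))) := by
    funext k
    rcases eq_or_ne k m with rfl | hk
    · simp [Term.ofClosed_subst, Term.inL, Term.subst]
    · simp [hk, Term.ofClosed_subst, Term.ofClosed_inL, Term.subst]
  exact (congrArg (C.U.Eq · _) (congrArg (@Term.op (S.sig.sum T.sig) _ (.inl o)) hargs)).mpr hunit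

theorem op_update_eq_const (hC : IsComposite C) (hS : HasUnits S) (hT0 : VarFree0 T)
    (c : Term T.sig Empty) {V : Type} (o : S.sig.Op) (m : Fin (S.sig.ar o))
    (args : Fin (S.sig.ar o) → Term (S.sig.sum T.sig) V) :
    C.U.Eq (.op (.inl o) (Function.update args m c.inR.ofClosed)) c.inR.ofClosed := by
  have hargs : (fun k => (Function.update Term.var m c.inR.ofClosed k).subst
      (Function.update args m c.inR.ofClosed)) = Function.update args m c.inR.ofClosed := by
    funext k
    rcases eq_or_ne k m with rfl | hk
    · simp [Term.ofClosed_subst]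
    · simp [hk, Term.subst]
  have hinst := (hC.op_update_var_eq_const hS hT0 c o m).subst
    (Function.update args m c.inR.ofClosed)
  exact (congrArg₂ C.U.Eq (congrArg (@Term.op (S.sig.sum T.sig) V (.inl o)) hargs)
    (Term.ofClosed_subst _ _)).mp hinst

theorem subst_inL_eq_const (hC : IsComposite C) (hS : HasUnits S) (hT0 : VarFree0 T)
    (c : Term T.sig Empty) {V : Type} {s : Term S.sig Nat} {i : Nat} (hi : i ∈ s.fv)
    {δ : Nat → Term (S.sig.sum T.sig) V} (hδ : δ i = c.inR.ofClosed) :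
    C.U.Eq (s.inL.subst δ) c.inR.ofClosed := by
  induction s with
  | var v =>
    obtain rfl : i = v := hi
    exact hδ ▸ .refl _
  | op o ts ih =>
    obtain ⟨m, hm⟩ := Set.mem_iUnion.mp hi
    exact (Theory.Eq.op_update (U := C.U) (.inl o) _ m (ih m hm)).trans
      (hC.op_update_eq_const hS hT0 c o m _)

theorem eq_of_const_eq_const (hC : IsComposite C) {c₁ c₂ : Term T.sig Empty} {V : Type}
    (h : C.U.Eq (c₁.inR.ofClosed : Term _ V) c₂.inR.ofClosed) : T.Eq c₁ c₂ := by
  -- `sep` needs some `σ : ℕ → Term S.sig V`, which need not exist for empty `V`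
  have h' : C.U.Eq (c₁.inR.ofClosed : Term _ Nat) c₂.inR.ofClosed :=
    h.ofClosed_subst (U := C.U) fun _ => .var 0
  rw [← sep_ofClosed c₁ fun _ => .var 0, ← sep_ofClosed c₂ fun _ => .var 0] at h'
  obtain ⟨Z, f, g, hT, -⟩ := hC.essUniq _ _ _ _ h'
  rw [Term.ofClosed_rename, Term.ofClosed_rename] at hT
  exact hT.of_ofClosed

end IsComposite

/-- **No-go theorem: too many constants.** If every positive-arity operation of `𝕊`
has a unit constant and `𝕊` has a term with at least two free variables, and in `𝕋`
any term equal to a variable-free term is variable-free, then if `𝕋` has two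
constants that are not provably equal, there is no composite theory of `𝕊` and `𝕋`. -/
theorem no_composite_two_constants (S T : Theory)
    (hS : HasUnits S)
    (s : Term S.sig Nat) (i j : Nat) (hij : i ≠ j) (hi : i ∈ s.fv) (hj : j ∈ s.fv)
    (hT0 : VarFree0 T)
    (c1 c2 : Term T.sig Empty) (hcc : ¬ T.Eq c1 c2) :
    ∀ C : Composite S T, ¬ IsComposite C := by
  intro C hC
  let δ : Nat → Term (S.sig.sum T.sig) Nat :=
    Function.update (fun _ => c2.inR.ofClosed) i c1.inR.ofClosed
  have h₁ : C.U.Eq (s.inL.subst δ) c1.inR.ofClosed :=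
    hC.subst_inL_eq_const hS hT0 c1 hi (Function.update_self ..)
  have h₂ : C.U.Eq (s.inL.subst δ) c2.inR.ofClosed :=
    hC.subst_inL_eq_const hS hT0 c2 hj (Function.update_of_ne hij.symm ..)
  exact hcc (hC.eq_of_const_eq_const (h₁.symm.trans h₂))
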